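/- Let B be a Σ-rigid ring and a, b ∈ B. If a·σ^θ(b) = 0 for some θ ∈ ℕ^n, then ab = 0. -/
import Mathlib


/-- The composition `σ₁^{α₁} ∘ ⋯ ∘ σₙ^{αₙ}` of a family of ring endomorphisms. -/
def sigmaPow {B : Type*} [Ring B] {n : ℕ} (σ : Fin n → B →+* B) (α : Fin n → ℕ) : B → B :=
  fun b => (List.finRange n).foldr (fun i x => (⇑(σ i))^[α i] x) b

lemma sigmaPow_mul {B : Type*} [Ring B] {n : ℕ} (σ : Fin n → B →+* B) (α : Fin n → ℕ)
    (x y : B) : sigmaPow σ α (x * y) = sigmaPow σ α x * sigmaPow σ α y := by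
  unfold sigmaPow
  induction List.finRange n with
  | nil => simp
  | cons i l ih => simp [ih, iterate_map_mul]

lemma sigmaPow_zero {B : Type*} [Ring B] {n : ℕ} (σ : Fin n → B →+* B) (x : B) :
    sigmaPow σ (fun _ => 0) x = x := by
  unfold sigmaPow
  induction List.finRange n with
  | nil => simp
  | cons i l ih => simp [ih]

theorem sigma_rigid_cancel (B : Type*) [Ring B] (n : ℕ) (σ : Fin n → B →+* B)
    (hinj : ∀ i, Function.Injective (σ i))
    (hrigid : ∀ (r : B) (α : Fin n → ℕ), r * sigmaPow σ α r = 0 → r = 0)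
    (a b : B) (θ : Fin n → ℕ) (h : a * sigmaPow σ θ b = 0) :
    a * b = 0 := by
  have hba : b * a = 0 := by
    apply hrigid (b * a) θ
    rw [sigmaPow_mul]
    calc b * a * (sigmaPow σ θ b * sigmaPow σ θ a)
        = b * (a * sigmaPow σ θ b) * sigmaPow σ θ a := by noncomm_ring
      _ = 0 := by rw [h]; noncomm_ring
  apply hrigid (a * b) (fun _ => 0)
  rw [sigmaPow_zero]
  calc a * b * (a * b) = a * (b * a) * b := by noncomm_ring
    _ = 0 := by rw [hba]; noncomm_ring
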